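/- Let f : V×V×V → ℝ be an alternating trilinear form (depending on polarizations only, not on momenta). For four modes (ξᵢ,kᵢ) with k₁+k₂+k₃+k₄ = 0, the Chevalley–Eilenberg coboundary of f, namely (δf) := −f([ξ₁,ξ₄],ξ₂,ξ₃) + f([ξ₂,ξ₄],ξ₁,ξ₃) − f([ξ₃,ξ₄],ξ₁,ξ₂) − f([ξ₁,ξ₂],ξ₃,ξ₄) + f([ξ₁,ξ₃],ξ₂,ξ₄) − f([ξ₂,ξ₃],ξ₁,ξ₄), equals (ξ₁·k₁)f(ξ₂,ξ₃,ξ₄) − (ξ₂·k₂)f(ξ₁,ξ₃,ξ₄) + (ξ₃·k₃)f(ξ₁,ξ₂,ξ₄) − (ξ₄·k₄)f(ξ₁,ξ₂,ξ₃); in particular it vanishes when all four modes are transverse ((ξᵢ·kᵢ)=0). -/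
import Mathlib


namespace Stmt6

variable {V : Type*} [AddCommGroup V] [Module ℝ V]

/-- The polarization of the momentum-space Lie bracket of modes. -/
def liePol (B : LinearMap.BilinForm ℝ V) (p q : V × V) : V :=
  B p.1 q.2 • q.1 - B q.1 p.2 • p.1


lemma expand (f : V [⋀^Fin 3]→ₗ[ℝ] ℝ) (a b : ℝ) (u v x y : V) :
    f ![a • u - b • v, x, y] = a * f ![u, x, y] - b * f ![v, x, y] := by
  have hupd : ∀ w : V, ![w, x, y] = Function.update ![(0:V), x, y] 0 w := by
    intro w; funext i; fin_cases i <;> simp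
  have hs : a • u - b • v = a • u + (-b) • v := by rw [neg_smul]; abel
  rw [hs, hupd, f.map_update_add, f.map_update_smul, f.map_update_smul,
    ← hupd, ← hupd]
  simp only [smul_eq_mul]; ring

lemma swap01 (f : V [⋀^Fin 3]→ₗ[ℝ] ℝ) (x y z : V) :
    f ![y, x, z] = -f ![x, y, z] := by
  have := f.map_swap ![x, y, z] (i := 0) (j := 1) (by decide)
  convert this using 2
  funext i; fin_cases i <;> rfl

lemma swap12 (f : V [⋀^Fin 3]→ₗ[ℝ] ℝ) (x y z : V) :
    f ![x, z, y] = -f ![x, y, z] := by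
  have := f.map_swap ![x, y, z] (i := 1) (j := 2) (by decide)
  convert this using 2
  funext i; fin_cases i <;> rfl

lemma cyc (f : V [⋀^Fin 3]→ₗ[ℝ] ℝ) (x y z : V) :
    f ![z, x, y] = f ![x, y, z] := by
  rw [swap01, swap12, neg_neg]

/-- For an alternating trilinear form `f` (depending on polarizations only) and
four modes with `k₁+k₂+k₃+k₄ = 0`, the Chevalley–Eilenberg coboundary
`δf = −f([ξ₁,ξ₄],ξ₂,ξ₃) + f([ξ₂,ξ₄],ξ₁,ξ₃) − f([ξ₃,ξ₄],ξ₁,ξ₂)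
  − f([ξ₁,ξ₂],ξ₃,ξ₄) + f([ξ₁,ξ₃],ξ₂,ξ₄) − f([ξ₂,ξ₃],ξ₁,ξ₄)`
equals
`(ξ₁·k₁)f(ξ₂,ξ₃,ξ₄) − (ξ₂·k₂)f(ξ₁,ξ₃,ξ₄) + (ξ₃·k₃)f(ξ₁,ξ₂,ξ₄) − (ξ₄·k₄)f(ξ₁,ξ₂,ξ₃)`;
in particular it vanishes when all four modes are transverse. -/
theorem coboundary_constant_cochain (B : LinearMap.BilinForm ℝ V) (hB : B.IsSymm)
    (f : V [⋀^Fin 3]→ₗ[ℝ] ℝ)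
    (ξ₁ k₁ ξ₂ k₂ ξ₃ k₃ ξ₄ k₄ : V) (h : k₁ + k₂ + k₃ + k₄ = 0) :
    (-f ![liePol B (ξ₁, k₁) (ξ₄, k₄), ξ₂, ξ₃]
        + f ![liePol B (ξ₂, k₂) (ξ₄, k₄), ξ₁, ξ₃]
        - f ![liePol B (ξ₃, k₃) (ξ₄, k₄), ξ₁, ξ₂]
        - f ![liePol B (ξ₁, k₁) (ξ₂, k₂), ξ₃, ξ₄]
        + f ![liePol B (ξ₁, k₁) (ξ₃, k₃), ξ₂, ξ₄]
        - f ![liePol B (ξ₂, k₂) (ξ₃, k₃), ξ₁, ξ₄]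
      = B ξ₁ k₁ * f ![ξ₂, ξ₃, ξ₄] - B ξ₂ k₂ * f ![ξ₁, ξ₃, ξ₄]
        + B ξ₃ k₃ * f ![ξ₁, ξ₂, ξ₄] - B ξ₄ k₄ * f ![ξ₁, ξ₂, ξ₃])
    ∧ (B ξ₁ k₁ = 0 → B ξ₂ k₂ = 0 → B ξ₃ k₃ = 0 → B ξ₄ k₄ = 0 →
        -f ![liePol B (ξ₁, k₁) (ξ₄, k₄), ξ₂, ξ₃]
          + f ![liePol B (ξ₂, k₂) (ξ₄, k₄), ξ₁, ξ₃]
          - f ![liePol B (ξ₃, k₃) (ξ₄, k₄), ξ₁, ξ₂]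
          - f ![liePol B (ξ₁, k₁) (ξ₂, k₂), ξ₃, ξ₄]
          + f ![liePol B (ξ₁, k₁) (ξ₃, k₃), ξ₂, ξ₄]
          - f ![liePol B (ξ₂, k₂) (ξ₃, k₃), ξ₁, ξ₄] = 0) := by
  have key :
      -f ![liePol B (ξ₁, k₁) (ξ₄, k₄), ξ₂, ξ₃]
        + f ![liePol B (ξ₂, k₂) (ξ₄, k₄), ξ₁, ξ₃]
        - f ![liePol B (ξ₃, k₃) (ξ₄, k₄), ξ₁, ξ₂]
        - f ![liePol B (ξ₁, k₁) (ξ₂, k₂), ξ₃, ξ₄]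
        + f ![liePol B (ξ₁, k₁) (ξ₃, k₃), ξ₂, ξ₄]
        - f ![liePol B (ξ₂, k₂) (ξ₃, k₃), ξ₁, ξ₄]
      = B ξ₁ k₁ * f ![ξ₂, ξ₃, ξ₄] - B ξ₂ k₂ * f ![ξ₁, ξ₃, ξ₄]
        + B ξ₃ k₃ * f ![ξ₁, ξ₂, ξ₄] - B ξ₄ k₄ * f ![ξ₁, ξ₂, ξ₃] := by
    have h1 : B ξ₁ k₁ + B ξ₁ k₂ + B ξ₁ k₃ + B ξ₁ k₄ = 0 := by
      have := congrArg (B ξ₁) h; simpa [map_add] using this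
    have h2 : B ξ₂ k₁ + B ξ₂ k₂ + B ξ₂ k₃ + B ξ₂ k₄ = 0 := by
      have := congrArg (B ξ₂) h; simpa [map_add] using this
    have h3 : B ξ₃ k₁ + B ξ₃ k₂ + B ξ₃ k₃ + B ξ₃ k₄ = 0 := by
      have := congrArg (B ξ₃) h; simpa [map_add] using this
    have h4 : B ξ₄ k₁ + B ξ₄ k₂ + B ξ₄ k₃ + B ξ₄ k₄ = 0 := by
      have := congrArg (B ξ₄) h; simpa [map_add] using this
    simp only [liePol, expand]
    rw [cyc f ξ₂ ξ₃ ξ₄, cyc f ξ₁ ξ₃ ξ₄, cyc f ξ₁ ξ₂ ξ₄, cyc f ξ₁ ξ₂ ξ₃,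
      swap01 f ξ₁ ξ₂ ξ₃, swap01 f ξ₂ ξ₃ ξ₄, swap01 f ξ₁ ξ₃ ξ₄, swap01 f ξ₁ ξ₂ ξ₄]
    linear_combination (-f ![ξ₂,ξ₃,ξ₄])*h1 + f ![ξ₁,ξ₃,ξ₄]*h2
      - f ![ξ₁,ξ₂,ξ₄]*h3 + f ![ξ₁,ξ₂,ξ₃]*h4
  refine ⟨key, fun t1 t2 t3 t4 => ?_⟩
  have := key
  rw [t1, t2, t3, t4] at this
  linarith [this]


end Stmt6
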